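/- arXiv:2602.03460 — 3 statements merged into one kernel-verified Lean document; each statement's English description precedes it below -/
import Mathlib

section
/- Let w = (C x₀, C A x₀, C A² x₀, …) be a sequence in ℓ² generated by a triple (C, A, x₀) with C ∈ ℝ^{1×n}, A ∈ ℝ^{n×n}, x₀ ∈ ℝⁿ. Then for any operator y in the algebra generated by the forward shift q and its adjoint q* with real coefficients, the sequence y w is also generated by some triple (C̄, Ā, x̄₀): y w = (C̄ x̄₀, C̄ Ā x̄₀, C̄ Ā² x̄₀, …). -/
noncomputable section

/-- The Hilbert space `ℓ²(ℕ)` of square-summable real sequences. -/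
abbrev H2 : Type := lp (fun _ : ℕ => ℝ) 2

open ContinuousLinearMap

/-- `ℝ[q,q*]`: finite real linear combinations of the operators `(q*)^i q^j`. -/
def Rqq (q : H2 →L[ℝ] H2) : Set (H2 →L[ℝ] H2) :=
  {y | ∃ (N : ℕ) (α : ℕ → ℕ → ℝ),
    y = ∑ i ∈ Finset.range N, ∑ j ∈ Finset.range N,
          α i j • ((adjoint q) ^ i * q ^ j)}

/-- A sequence generated by a triple `(c, A, x)` over some finite index type. -/
def Gen (v : ℕ → ℝ) : Prop :=
  ∃ (ι : Type) (_ : Fintype ι) (_ : DecidableEq ι) (c : ι → ℝ) (A : Matrix ι ι ℝ) (x : ι → ℝ),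
    ∀ k, v k = dotProduct c ((A ^ k).mulVec x)

lemma Gen.congr {u v : ℕ → ℝ} (h : ∀ k, u k = v k) (hv : Gen v) : Gen u := by
  obtain ⟨ι, hι, hd, c, A, x, hx⟩ := hv
  exact ⟨ι, hι, hd, c, A, x, fun k => (h k).trans (hx k)⟩

lemma Gen.zero : Gen (fun _ => (0 : ℝ)) := by
  refine ⟨Unit, inferInstance, inferInstance, 0, 0, 0, fun k => ?_⟩
  simp [zero_dotProduct]

lemma Gen.smul {v : ℕ → ℝ} (r : ℝ) (h : Gen v) : Gen (fun k => r * v k) := by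
  obtain ⟨ι, _, _, c, A, x, hx⟩ := h
  refine ⟨ι, ‹_›, ‹_›, r • c, A, x, fun k => ?_⟩
  dsimp only
  rw [hx k, smul_dotProduct]
  simp

lemma Gen.add {v u : ℕ → ℝ} (hv : Gen v) (hu : Gen u) : Gen (fun k => v k + u k) := by
  obtain ⟨ι, _, _, c, A, x, hx⟩ := hv
  obtain ⟨κ, _, _, d, B, z, hz⟩ := hu
  refine ⟨ι ⊕ κ, inferInstance, inferInstance, Sum.elim c d, Matrix.fromBlocks A 0 0 B, Sum.elim x z, fun k => ?_⟩
  have hpow : (Matrix.fromBlocks A 0 0 B) ^ k = Matrix.fromBlocks (A ^ k) 0 0 (B ^ k) := by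
    induction k with
    | zero => simp [Matrix.fromBlocks_one]
    | succ k ih =>
      rw [pow_succ, pow_succ, pow_succ, ih, Matrix.fromBlocks_multiply]
      simp
  dsimp only
  rw [hx k, hz k, hpow, Matrix.fromBlocks_mulVec]
  simp [sumElim_dotProduct_sumElim]

lemma Gen.delay {v : ℕ → ℝ} (h : Gen v) :
    Gen (fun k => match k with | 0 => (0 : ℝ) | (k + 1) => v k) := by
  obtain ⟨ι, _, _, c, A, x, hx⟩ := h
  refine ⟨ι ⊕ Unit, inferInstance, inferInstance, Sum.elim (fun _ => 0) (fun _ => 1),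
    Matrix.fromBlocks A 0 (Matrix.of fun _ i => c i) 0, Sum.elim x (fun _ : Unit => (0 : ℝ)),
    fun k => ?_⟩
  have key : ∀ k, ((Matrix.fromBlocks A 0 (Matrix.of fun (_ : Unit) i => c i) 0) ^ k).mulVec
      (Sum.elim x (fun _ : Unit => (0 : ℝ)))
      = Sum.elim ((A ^ k).mulVec x)
          (fun _ : Unit => (match k with | 0 => (0 : ℝ) | (k + 1) => v k : ℝ)) := by
    intro k
    induction k with
    | zero =>
      ext (i | i) <;> simp
    | succ k ih =>
      rw [pow_succ', ← Matrix.mulVec_mulVec, ih, Matrix.fromBlocks_mulVec]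
      ext (i | i)
      · simp [Matrix.mulVec_mulVec, ← pow_succ']
      · simp only [Sum.elim_comp_inl, Sum.elim_comp_inr, Matrix.zero_mulVec, add_zero,
          Sum.elim_inr]
        rw [hx k]
        rfl
  rw [key k]
  simp [dotProduct, Fintype.sum_sum_type]

lemma Gen.finsetSum {β : Type*} (s : Finset β) (v : β → ℕ → ℝ)
    (h : ∀ b ∈ s, Gen (v b)) : Gen (fun k => ∑ b ∈ s, v b k) := by
  classical
  induction s using Finset.induction_on with
  | empty => exact Gen.congr (by simp) Gen.zero
  | insert a s' hb ih =>
    refine Gen.congr (fun k => Finset.sum_insert hb) ?_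
    exact Gen.add (h a (Finset.mem_insert_self a s'))
      (ih fun b hbs => h b (Finset.mem_insert_of_mem hbs))

lemma adjoint_apply_eq (q : H2 →L[ℝ] H2) (hq : ∀ (f : H2) (k : ℕ), (q f) k = f (k + 1))
    (f : H2) (k : ℕ) :
    ((adjoint q) f) k = (match k with | 0 => (0 : ℝ) | (k + 1) => f k) := by
  set g : ℕ → ℝ := fun k => match k with | 0 => (0 : ℝ) | (k + 1) => f k with hg
  have hfs : Summable fun i => ‖f i‖ ^ (2 : ENNReal).toReal := by
    have := lp.memℓp f
    rwa [memℓp_gen_iff (by norm_num)] at this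
  have hmem : Memℓp g 2 := by
    apply memℓp_gen
    rw [← summable_nat_add_iff 1]
    exact hfs
  set s : H2 := ⟨g, hmem⟩ with hs
  have hcoe : ∀ j, s j = g j := fun j => rfl
  have : (adjoint q) f = s := by
    apply ext_inner_right (𝕜 := ℝ)
    intro v
    rw [ContinuousLinearMap.adjoint_inner_left, lp.inner_eq_tsum, lp.inner_eq_tsum]
    have hsum : Summable fun i => (inner ℝ (s i) (v i) : ℝ) := lp.summable_inner s v
    rw [Summable.tsum_eq_zero_add hsum]
    have h0 : (inner ℝ (s 0) (v 0) : ℝ) = 0 := by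
      simp [hcoe, hg, RCLike.inner_apply]
    rw [h0, zero_add]
    apply tsum_congr
    intro i
    simp [RCLike.inner_apply, hq, hcoe, hg]
  rw [this]

lemma qpow_apply (q : H2 →L[ℝ] H2) (hq : ∀ (f : H2) (k : ℕ), (q f) k = f (k + 1)) :
    ∀ (j : ℕ) (f : H2) (k : ℕ), ((q ^ j) f) k = f (k + j) := by
  intro j
  induction j with
  | zero => intro f k; simp
  | succ j ih =>
    intro f k
    rw [pow_succ, ContinuousLinearMap.mul_apply, ih, hq]
    congr 1

lemma Gen.adjoint_pow (q : H2 →L[ℝ] H2) (hq : ∀ (f : H2) (k : ℕ), (q f) k = f (k + 1)) :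
    ∀ (i : ℕ) (f : H2), Gen (fun k => f k) → Gen (fun k => (((adjoint q) ^ i) f) k) := by
  intro i
  induction i with
  | zero => intro f hf; simpa using hf
  | succ i ih =>
    intro f hf
    have h1 : ∀ k, (((adjoint q) ^ (i + 1)) f) k
        = (match k with | 0 => (0 : ℝ) | (k + 1) => (((adjoint q) ^ i) f) k) := by
      intro k
      rw [pow_succ', ContinuousLinearMap.mul_apply, adjoint_apply_eq q hq]
    exact Gen.congr h1 (Gen.delay (ih f hf))

lemma Gen.toFin {v : ℕ → ℝ} (h : Gen v) :
    ∃ (m : ℕ) (C' : Matrix (Fin 1) (Fin m) ℝ) (A' : Matrix (Fin m) (Fin m) ℝ)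
      (x' : Fin m → ℝ), ∀ k : ℕ, v k = C'.mulVec ((A' ^ k).mulVec x') 0 := by
  obtain ⟨ι, _, _, c, A, x, hx⟩ := h
  classical
  let e := Fintype.equivFin ι
  refine ⟨Fintype.card ι, Matrix.of (fun _ i => c (e.symm i)),
    A.submatrix e.symm e.symm, x ∘ e.symm, fun k => ?_⟩
  have hpow : (A.submatrix ⇑e.symm ⇑e.symm) ^ k = (A ^ k).submatrix ⇑e.symm ⇑e.symm := by
    have := map_pow (Matrix.reindexAlgEquiv ℝ ℝ e) A k
    simpa [Matrix.reindexAlgEquiv_apply, Matrix.reindex_apply] using this.symm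
  rw [hx k, hpow]
  have hmv : ((A ^ k).submatrix ⇑e.symm ⇑e.symm).mulVec (x ∘ ⇑e.symm)
      = ((A ^ k).mulVec x) ∘ ⇑e.symm := by
    have hx' : (x ∘ ⇑e.symm) ∘ ⇑e.symm.symm = x := by funext i; simp
    rw [Matrix.submatrix_mulVec_equiv, hx']
  rw [hmv]
  simp only [Matrix.mulVec, dotProduct, Matrix.of_apply, Function.comp_apply]
  exact (Equiv.sum_comp e.symm fun i => c i * ((A ^ k).mulVec x) i).symm

/-- If `w = (C x₀, C A x₀, C A² x₀, …)` is an `ℓ²` sequence generated by a triple `(C, A, x₀)`,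
then for any `y ∈ ℝ[q,q*]` the sequence `y w` is also generated by some triple `(C̄, Ā, x̄₀)`. -/
theorem Rqq_preserves_triple_sequences
    (q : H2 →L[ℝ] H2) (hq : ∀ (f : H2) (k : ℕ), (q f) k = f (k + 1))
    (y : H2 →L[ℝ] H2) (hy : y ∈ Rqq q)
    (n : ℕ) (C : Matrix (Fin 1) (Fin n) ℝ) (A : Matrix (Fin n) (Fin n) ℝ) (x₀ : Fin n → ℝ)
    (w : H2) (hw : ∀ k : ℕ, w k = C.mulVec ((A ^ k).mulVec x₀) 0) :
    ∃ (m : ℕ) (C' : Matrix (Fin 1) (Fin m) ℝ) (A' : Matrix (Fin m) (Fin m) ℝ)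
      (x' : Fin m → ℝ),
      ∀ k : ℕ, (y w) k = C'.mulVec ((A' ^ k).mulVec x') 0 := by
  obtain ⟨N, α, rfl⟩ := hy
  -- each `q^j w` is generated by a triple
  have hqj : ∀ j : ℕ, Gen (fun k => ((q ^ j) w) k) := by
    intro j
    refine ⟨Fin n, inferInstance, inferInstance, fun i => C 0 i, A, (A ^ j).mulVec x₀, fun k => ?_⟩
    dsimp only
    rw [qpow_apply q hq, hw]
    have h2 : (A ^ k).mulVec ((A ^ j).mulVec x₀) = (A ^ (k + j)).mulVec x₀ := by
      rw [Matrix.mulVec_mulVec, ← pow_add]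
    rw [h2]
    rfl
  -- hence each `(q*)^i q^j w` is generated
  have hij : ∀ i j : ℕ, Gen (fun k => (((adjoint q) ^ i) ((q ^ j) w)) k) :=
    fun i j => Gen.adjoint_pow q hq i _ (hqj j)
  -- evaluate the sum pointwise
  have hval : ∀ k : ℕ,
      ((∑ i ∈ Finset.range N, ∑ j ∈ Finset.range N,
          α i j • ((adjoint q) ^ i * q ^ j)) w) k
      = ∑ i ∈ Finset.range N, ∑ j ∈ Finset.range N,
          α i j * ((((adjoint q) ^ i) ((q ^ j) w)) k) := by
    intro k
    rw [ContinuousLinearMap.sum_apply, lp.coeFn_sum, Finset.sum_apply]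
    refine Finset.sum_congr rfl fun i _ => ?_
    rw [ContinuousLinearMap.sum_apply, lp.coeFn_sum, Finset.sum_apply]
    refine Finset.sum_congr rfl fun j _ => ?_
    rw [ContinuousLinearMap.smul_apply, lp.coeFn_smul, Pi.smul_apply,
      ContinuousLinearMap.mul_apply]
    rfl
  have hGen : Gen (fun k =>
      ((∑ i ∈ Finset.range N, ∑ j ∈ Finset.range N,
          α i j • ((adjoint q) ^ i * q ^ j)) w) k) := by
    refine Gen.congr hval ?_
    refine Gen.finsetSum _ _ fun i _ => ?_
    refine Gen.finsetSum _ _ fun j _ => ?_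
    exact Gen.smul (α i j) (hij i j)
  exact hGen.toFin
end
end

section
/- Let L = L₀ + L₁ q act on ℓ²-sequences valued in ℝⁿ, where L₀ is an invertible lower triangular real n×n matrix and L₁ is lower triangular with zero diagonal (so L₀⁻¹L₁ is nilpotent). Fix r ∈ (0,1), K₂ ∈ ℝ^{n×m}, x₀ ∈ ℝ^m. If z solves L L* z = (r⁰K₂x₀, r¹K₂x₀, r²K₂x₀, …), then (L₀ + L₁ r) L₀ᵀ z[0] = K₂ x₀. -/
/-!
Put `u k = v (k+1) - r • v k`. Subtracting `r` times the `k`-th equation from the `(k+1)`-st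
shows `L₀ u k + L₁ u (k+1) = 0` for all `k`. Reading this coordinate by coordinate, lower
triangularity of `L₀` and strict lower triangularity of `L₁` give `L₀ i i * u k i = 0` once the
earlier coordinates of all `u k` vanish, so `u = 0` by induction on the coordinate (this is the
nilpotency of `L₀⁻¹ L₁`). Hence `v 1 = r • v 0 = r • L₀ᵀ z 0`, and the equation at `k = 0` is the
claim.
-/

namespace Matrix

variable {ι R : Type*} [Fintype ι] [CommRing R]

theorem mulVec_add_mulVec_succ_sub_smul_eq_zero {A B : Matrix ι ι R} {v : ℕ → ι → R} {r : R}
    {w : ι → R}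
    (hv : ∀ k, A *ᵥ v k + B *ᵥ v (k + 1) = r ^ k • w) (k : ℕ) :
    A *ᵥ (v (k + 1) - r • v k) + B *ᵥ (v (k + 2) - r • v (k + 1)) = 0 := by
  have hk : A *ᵥ v (k + 1) + B *ᵥ v (k + 2) - r • (A *ᵥ v k + B *ᵥ v (k + 1)) = 0 := by
    rw [hv, hv, smul_smul, ← pow_succ', sub_self]
  rw [← hk]
  simp only [mulVec_sub, mulVec_smul, smul_add]
  abel

variable [LinearOrder ι]

theorem IsLowerTriangular.isUnit_apply_self [DecidableEq ι] {M : Matrix ι ι R}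
    (hM : M.IsLowerTriangular) (hunit : IsUnit M) (i : ι) : IsUnit (M i i) := by
  rw [isUnit_iff_isUnit_det, det_of_isLowerTriangular M hM, IsUnit.prod_univ_iff] at hunit
  exact hunit i

theorem mulVec_add_mulVec_apply_of_eq_zero_of_lt {A B : Matrix ι ι R} {x y : ι → R} {i : ι}
    (hA : A.IsLowerTriangular) (hB : ∀ j, i ≤ j → B i j = 0)
    (hx : ∀ j < i, x j = 0) (hy : ∀ j < i, y j = 0) :
    (A *ᵥ x + B *ᵥ y) i = A i i * x i := by
  have hAx : (A *ᵥ x) i = A i i * x i := by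
    refine Finset.sum_eq_single i (fun j _ hji => ?_) (by simp)
    rcases hji.lt_or_gt with hlt | hgt
    · rw [hx j hlt, mul_zero]
    · simp [hA hgt]
  have hBy : (B *ᵥ y) i = 0 := by
    refine Finset.sum_eq_zero fun j _ => ?_
    rcases lt_or_ge j i with hlt | hge
    · rw [hy j hlt, mul_zero]
    · simp [hB j hge]
  rw [Pi.add_apply, hAx, hBy, add_zero]

theorem eq_zero_of_mulVec_add_mulVec_succ_eq_zero {L₀ L₁ : Matrix ι ι R} {u : ℕ → ι → R}
    (hL₀ : L₀.IsLowerTriangular) (hdiag : ∀ i, IsUnit (L₀ i i))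
    (hL₁ : ∀ i j, i ≤ j → L₁ i j = 0) (hu : ∀ k, L₀ *ᵥ u k + L₁ *ᵥ u (k + 1) = 0) (k : ℕ) :
    u k = 0 := by
  suffices h : ∀ i, ∀ k, u k i = 0 from funext fun i => h i k
  intro i
  induction i using WellFoundedLT.induction with
  | ind i ih =>
    intro k
    have hi := congrFun (hu k) i
    rw [mulVec_add_mulVec_apply_of_eq_zero_of_lt hL₀ (hL₁ i) (fun j hj => ih j hj k)
      (fun j hj => ih j hj (k + 1))] at hi
    exact (hdiag i).mul_right_eq_zero.mp hi

end Matrix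

theorem lqr_back_substitution_first_entry_general
    (n m : ℕ) (L₀ L₁ : Matrix (Fin n) (Fin n) ℝ)
    (hL₀inv : IsUnit L₀)
    (hL₀tri : ∀ i j : Fin n, i < j → L₀ i j = 0)
    (hL₁tri : ∀ i j : Fin n, i < j → L₁ i j = 0)
    (hL₁diag : ∀ i : Fin n, L₁ i i = 0)
    (r : ℝ)
    (K₂ : Matrix (Fin n) (Fin m) ℝ) (x₀ : Fin m → ℝ)
    (z : ℕ → EuclideanSpace ℝ (Fin n))
    (v : ℕ → (Fin n → ℝ))
    (hv : ∀ k : ℕ, v k =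
      L₀.transpose.mulVec (z k) + (if k = 0 then 0 else L₁.transpose.mulVec (z (k - 1))))
    (hsol : ∀ k : ℕ, L₀.mulVec (v k) + L₁.mulVec (v (k + 1)) = r ^ k • K₂.mulVec x₀) :
    ((L₀ + r • L₁) * L₀.transpose).mulVec (z 0) = K₂.mulVec x₀ := by
  have hL₀ : L₀.IsLowerTriangular := fun i j h => hL₀tri i j h
  have hL₁ : ∀ i j, i ≤ j → L₁ i j = 0 := fun i j hij =>
    hij.eq_or_lt.elim (fun h => h ▸ hL₁diag i) (hL₁tri i j)
  have hv₁ : v 1 = r • v 0 := sub_eq_zero.mp <|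
    Matrix.eq_zero_of_mulVec_add_mulVec_succ_eq_zero (u := fun k => v (k + 1) - r • v k) hL₀
      (hL₀.isUnit_apply_self hL₀inv) hL₁ (Matrix.mulVec_add_mulVec_succ_sub_smul_eq_zero hsol) 0
  have hv₀ : v 0 = L₀.transpose.mulVec (z 0) := by simp [hv 0]
  have h₀ := hsol 0
  rw [hv₁, hv₀, pow_zero, one_smul, Matrix.mulVec_smul] at h₀
  rwa [← Matrix.mulVec_mulVec, Matrix.add_mulVec, Matrix.smul_mulVec]

/-- Let `L = L₀ + L₁ q` act on `ℓ²` sequences valued in `ℝⁿ`, with `L₀` invertible lower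
triangular and `L₁` lower triangular with zero diagonal, and let `L* = L₀ᵀ + L₁ᵀ q*`.
Fix `r ∈ (0,1)`. If `z ∈ ℓ²` solves `L L* z = (r⁰ K₂ x₀, r¹ K₂ x₀, r² K₂ x₀, …)`, then
`(L₀ + r L₁) L₀ᵀ z[0] = K₂ x₀`.  Here `v = L* z` is written out explicitly:
`v k = L₀ᵀ z k + (if k = 0 then 0 else L₁ᵀ z (k−1))`, and the equation `L v = w` reads
`L₀ v k + L₁ v (k+1) = r^k K₂ x₀`. -/
theorem lqr_back_substitution_first_entry
    (n m : ℕ) (L₀ L₁ : Matrix (Fin n) (Fin n) ℝ)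
    (hL₀inv : IsUnit L₀)
    (hL₀tri : ∀ i j : Fin n, i < j → L₀ i j = 0)
    (hL₁tri : ∀ i j : Fin n, i < j → L₁ i j = 0)
    (hL₁diag : ∀ i : Fin n, L₁ i i = 0)
    (r : ℝ) (hr0 : 0 < r) (hr1 : r < 1)
    (K₂ : Matrix (Fin n) (Fin m) ℝ) (x₀ : Fin m → ℝ)
    (z : ℕ → EuclideanSpace ℝ (Fin n)) (hz : Memℓp z 2)
    (v : ℕ → (Fin n → ℝ))
    (hv : ∀ k : ℕ, v k =
      L₀.transpose.mulVec (z k) + (if k = 0 then 0 else L₁.transpose.mulVec (z (k - 1))))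
    (hsol : ∀ k : ℕ, L₀.mulVec (v k) + L₁.mulVec (v (k + 1)) = r ^ k • K₂.mulVec x₀) :
    ((L₀ + r • L₁) * L₀.transpose).mulVec (z 0) = K₂.mulVec x₀ :=
  lqr_back_substitution_first_entry_general n m L₀ L₁ hL₀inv hL₀tri hL₁tri hL₁diag r K₂ x₀ z v hv
    hsol
end

section
/- A graph G has no cycles of length four or greater if and only if its line graph (the graph with one vertex per edge of G, and edges between vertices whose corresponding edges in G share an endpoint) is chordal. -/
noncomputable section

open SimpleGraph

/-- A graph is chordal if every cycle of length at least four has a chord: an edge of the graph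
joining two vertices of the cycle that is not an edge of the cycle itself. -/
def IsChordal {V : Type*} (G : SimpleGraph V) : Prop :=
  ∀ (v : V) (w : G.Walk v v), w.IsCycle → 4 ≤ w.length →
    ∃ x y : V, x ∈ w.support ∧ y ∈ w.support ∧ x ≠ y ∧ G.Adj x y ∧ s(x, y) ∉ w.edges

section Aux

variable {V : Type*} {G : SimpleGraph V}



lemma support_eq_map {u v : V} (p : G.Walk u v) :
    p.support = (List.range (p.length + 1)).map p.getVert := by
  induction p with
  | nil => rfl
  | cons h q ih =>
    rw [Walk.support_cons, Walk.length_cons, List.range_succ_eq_map, List.map_cons,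
      List.map_map, ih]
    congr 1

lemma edges_eq_map {u v : V} (p : G.Walk u v) :
    p.edges = (List.range p.length).map (fun i => s(p.getVert i, p.getVert (i + 1))) := by
  induction p with
  | nil => rfl
  | cons h q ih =>
    rw [Walk.edges_cons, Walk.length_cons, List.range_succ_eq_map, List.map_cons,
      List.map_map, ih]
    congr 1
    simp [Walk.getVert_cons_succ, Walk.getVert_zero]

def walkOfFn (G : SimpleGraph V) (f : ℕ → V) :
    (n : ℕ) → (∀ i < n, G.Adj (f i) (f (i + 1))) → G.Walk (f 0) (f n)
  | 0, _ => Walk.nil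
  | n + 1, h =>
    Walk.cons (h 0 (Nat.succ_pos n))
      (walkOfFn G (fun i => f (i + 1)) n (fun i hi => h (i + 1) (by omega)))

lemma walkOfFn_length (f : ℕ → V) (n : ℕ) (h : ∀ i < n, G.Adj (f i) (f (i + 1))) :
    (walkOfFn G f n h).length = n := by
  induction n generalizing f with
  | zero => rfl
  | succ n ih => simp [walkOfFn, ih]

lemma walkOfFn_getVert (f : ℕ → V) (n : ℕ) (h : ∀ i < n, G.Adj (f i) (f (i + 1)))
    {i : ℕ} (hi : i ≤ n) : (walkOfFn G f n h).getVert i = f i := by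
  induction n generalizing f i with
  | zero => interval_cases i; rfl
  | succ n ih =>
    cases i with
    | zero => rfl
    | succ i => exact ih _ _ (by omega)
lemma cast_inj_of_lt {n i j : ℕ} (hi : i < n) (hj : j < n) (h : (i : ZMod n) = j) : i = j := by
  have := congrArg ZMod.val h
  rwa [ZMod.val_cast_of_lt hi, ZMod.val_cast_of_lt hj] at this

lemma exists_cycle_of_cycFun (n : ℕ) (hn : 3 ≤ n) (g : ZMod n → V)
    (hinj : Function.Injective g) (hadj : ∀ i, G.Adj (g i) (g (i + 1))) :
    ∃ (w : G.Walk (g 0) (g 0)), w.IsCycle ∧ w.length = n ∧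
      (∀ x, x ∈ w.support ↔ ∃ i, x = g i) ∧
      (∀ e, e ∈ w.edges ↔ ∃ i : ZMod n, e = s(g i, g (i + 1))) := by
  haveI : NeZero n := ⟨by omega⟩
  set f : ℕ → V := fun i => g i with hf
  have hcast : ∀ i : ℕ, ((i + 1 : ℕ) : ZMod n) = (i : ZMod n) + 1 := by
    intro i; push_cast; ring
  have hfadj : ∀ i < n, G.Adj (f i) (f (i + 1)) := by
    intro i _
    simp only [hf, hcast]
    exact hadj i
  have h0 : f 0 = g 0 := by simp [hf]
  have hn' : f n = g 0 := by simp [hf]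
  set w0 := walkOfFn G f n hfadj with hw0
  have len : w0.length = n := walkOfFn_length f n hfadj
  have gv : ∀ i ≤ n, w0.getVert i = f i := fun i hi => walkOfFn_getVert f n hfadj hi
  have hsucc : ∀ i < n, s(w0.getVert i, w0.getVert (i + 1)) = s(g i, g ((i : ZMod n) + 1)) := by
    intro i hi
    rw [gv i (le_of_lt hi), gv (i + 1) hi, hf]
    simp only [hcast]
  have hsup : w0.support = (List.range (n + 1)).map f := by
    rw [support_eq_map, len]
    exact List.map_congr_left fun i hi => gv i (by simpa using Nat.lt_succ_iff.mp (List.mem_range.mp hi))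
  have hedg : w0.edges = (List.range n).map (fun (i : ℕ) => s(g (i : ZMod n), g ((i : ZMod n) + 1))) := by
    rw [edges_eq_map, len]
    exact List.map_congr_left fun i hi => hsucc i (List.mem_range.mp hi)
  refine ⟨w0.copy h0 hn', ?_, ?_, ?_, ?_⟩
  · constructor
    · constructor
      · constructor
        rw [Walk.edges_copy, hedg]
        refine List.Nodup.map_on ?_ List.nodup_range
        intro i hi j hj hij
        simp only [List.mem_range] at hi hj
        rcases Sym2.eq_iff.mp hij with ⟨h1, h2⟩ | ⟨h1, h2⟩
        · exact cast_inj_of_lt hi hj (hinj h1)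
        · exfalso
          have e1 : (i : ZMod n) = (j : ZMod n) + 1 := hinj h1
          have e2 : (j : ZMod n) = (i : ZMod n) + 1 := hinj h2.symm
          rw [e2] at e1
          have : ((2 : ℕ) : ZMod n) = ((0 : ℕ) : ZMod n) := by
            push_cast
            linear_combination -e1
          have := cast_inj_of_lt (by omega) (by omega) this
          omega
      · intro hnil
        have : (w0.copy h0 hn').length = 0 := Walk.nil_iff_length_eq.mp (by rw [hnil]; exact Walk.nil_nil)
        rw [Walk.length_copy, len] at this
        omega
    · rw [Walk.support_copy, hsup, List.range_succ_eq_map, List.map_cons, List.map_map,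
        List.tail_cons]
      refine List.Nodup.map_on ?_ List.nodup_range
      intro i hi j hj hij
      simp only [List.mem_range] at hi hj
      simp only [Function.comp, hf, Nat.succ_eq_add_one, hcast] at hij
      have := hinj hij
      exact cast_inj_of_lt hi hj (add_right_cancel this)
  · rw [Walk.length_copy, len]
  · intro x
    rw [Walk.support_copy, hsup]
    simp only [List.mem_map, List.mem_range]
    constructor
    · rintro ⟨i, _, rfl⟩
      exact ⟨i, rfl⟩
    · rintro ⟨k, rfl⟩
      refine ⟨k.val, by have := ZMod.val_lt k; omega, ?_⟩
      simp [hf, ZMod.natCast_val, ZMod.cast_id]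
  · intro e
    rw [Walk.edges_copy, hedg]
    simp only [List.mem_map, List.mem_range]
    constructor
    · rintro ⟨i, _, rfl⟩
      exact ⟨(i : ZMod n), rfl⟩
    · rintro ⟨k, rfl⟩
      refine ⟨k.val, ZMod.val_lt k, ?_⟩
      simp [ZMod.natCast_val, ZMod.cast_id]
lemma cycFun_of_cycle {v : V} {w : G.Walk v v} (hw : w.IsCycle) :
    ∃ g : ZMod w.length → V, Function.Injective g ∧
      (∀ i, G.Adj (g i) (g (i + 1))) ∧
      (∀ x, x ∈ w.support ↔ ∃ i, x = g i) ∧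
      (∀ e, e ∈ w.edges ↔ ∃ i, e = s(g i, g (i + 1))) := by
  set n := w.length with hn
  have h3 : 3 ≤ n := hw.three_le_length
  haveI : NeZero n := ⟨by omega⟩
  set g : ZMod n → V := fun i => w.getVert i.val with hg
  -- injectivity of getVert on [1, n]
  have htail : w.support.tail = (List.range n).map (fun i => w.getVert (i + 1)) := by
    rw [support_eq_map, ← hn, List.range_succ_eq_map, List.map_cons, List.tail_cons,
      List.map_map]
    rfl
  have hinj1 : ∀ i < n, ∀ j < n, w.getVert (i + 1) = w.getVert (j + 1) → i = j := by
    have := hw.support_nodup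
    rw [htail] at this
    intro i hi j hj hij
    exact List.inj_on_of_nodup_map this (List.mem_range.mpr hi) (List.mem_range.mpr hj) hij
  have hgv0 : w.getVert n = w.getVert 0 := by rw [Walk.getVert_length, Walk.getVert_zero]
  have hinj0 : ∀ i < n, ∀ j < n, w.getVert i = w.getVert j → i = j := by
    intro i hi j hj hij
    rcases Nat.eq_zero_or_pos i with rfl | hi0
    · rcases Nat.eq_zero_or_pos j with rfl | hj0
      · rfl
      · exfalso
        rw [← hgv0] at hij
        have hm : n = (n - 1) + 1 := by omega
        have hjm : j = (j - 1) + 1 := by omega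
        rw [hm, hjm] at hij
        have := hinj1 (n - 1) (by omega) (j - 1) (by omega) hij
        omega
    · rcases Nat.eq_zero_or_pos j with rfl | hj0
      · exfalso
        rw [← hgv0] at hij
        have hm : n = (n - 1) + 1 := by omega
        have him : i = (i - 1) + 1 := by omega
        rw [hm, him] at hij
        have := hinj1 (i - 1) (by omega) (n - 1) (by omega) hij
        omega
      · obtain ⟨i', rfl⟩ : ∃ i', i = i' + 1 := ⟨i - 1, by omega⟩
        obtain ⟨j', rfl⟩ : ∃ j', j = j' + 1 := ⟨j - 1, by omega⟩
        have := hinj1 i' (by omega) j' (by omega) hij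
        omega
  have hginj : Function.Injective g := by
    intro i j hij
    have := hinj0 i.val (ZMod.val_lt i) j.val (ZMod.val_lt j) hij
    exact ZMod.val_injective n this
  -- successor formula
  have hsucc : ∀ i : ZMod n, g (i + 1) = w.getVert (i.val + 1) := by
    intro i
    have hiv := ZMod.val_lt i
    rcases Nat.lt_or_ge (i.val + 1) n with hlt | hge
    · have : (i + 1).val = i.val + 1 := by
        have : i + 1 = ((i.val + 1 : ℕ) : ZMod n) := by
          push_cast
          simp [ZMod.natCast_val, ZMod.cast_id]
        rw [this, ZMod.val_cast_of_lt hlt]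
      rw [hg]; simp only [this]
    · have hiv1 : i.val + 1 = n := by omega
      have : i + 1 = 0 := by
        have : i = ((i.val : ℕ) : ZMod n) := by simp [ZMod.natCast_val, ZMod.cast_id]
        rw [this, ← Nat.cast_one, ← Nat.cast_add, hiv1, ZMod.natCast_self]
      rw [this, hg]
      simp only [ZMod.val_zero, Walk.getVert_zero]
      rw [hiv1, Walk.getVert_length]
  have hadj : ∀ i, G.Adj (g i) (g (i + 1)) := by
    intro i
    rw [hsucc i]
    exact w.adj_getVert_succ (ZMod.val_lt i)
  refine ⟨g, hginj, hadj, ?_, ?_⟩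
  · intro x
    rw [support_eq_map, ← hn]
    simp only [List.mem_map, List.mem_range]
    constructor
    · rintro ⟨i, hi, rfl⟩
      rcases Nat.lt_or_ge i n with hlt | hge
      · exact ⟨(i : ZMod n), by rw [hg]; simp [ZMod.val_cast_of_lt hlt]⟩
      · have : i = n := by omega
        subst this
        exact ⟨0, by rw [hgv0, hg]; simp⟩
    · rintro ⟨k, rfl⟩
      exact ⟨k.val, by have := ZMod.val_lt k; omega, rfl⟩
  · intro e
    rw [edges_eq_map, ← hn]
    simp only [List.mem_map, List.mem_range]
    constructor
    · rintro ⟨i, hi, rfl⟩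
      refine ⟨(i : ZMod n), ?_⟩
      rw [hsucc, hg]
      simp [ZMod.val_cast_of_lt hi]
    · rintro ⟨k, rfl⟩
      refine ⟨k.val, ZMod.val_lt k, ?_⟩
      rw [hsucc, hg]
lemma cast_eq_zero_aux {n m : ℕ} (hm : m < n) (h : ((m : ℕ) : ZMod n) = ((0 : ℕ) : ZMod n)) :
    m = 0 := cast_inj_of_lt hm (by omega) h

theorem main_thm {V : Type*} (G : SimpleGraph V) :
    (∀ (v : V) (w : G.Walk v v), w.IsCycle → w.length < 4) ↔
      (∀ (v : G.edgeSet) (w : (G.lineGraph).Walk v v), w.IsCycle → 4 ≤ w.length →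
        ∃ x y : G.edgeSet, x ∈ w.support ∧ y ∈ w.support ∧ x ≠ y ∧ (G.lineGraph).Adj x y ∧
          s(x, y) ∉ w.edges) := by
  constructor
  · -- no long cycles in G → lineGraph chordal
    intro hG v W hW hlen
    obtain ⟨E, hEinj, hEadj, hEsup, hEedg⟩ := cycFun_of_cycle hW
    haveI : NeZero W.length := ⟨by omega⟩
    have hzero : ∀ m : ℕ, m < W.length → ((m : ℕ) : ZMod W.length) = 0 → m = 0 := by
      intro m hm h
      exact cast_eq_zero_aux hm (by simpa using h)
    by_cases hcase : ∃ i j : ZMod W.length,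
        j ≠ i - 1 ∧ j ≠ i ∧ j ≠ i + 1 ∧ (G.lineGraph).Adj (E i) (E j)
    · obtain ⟨i, j, hj1, hj2, hj3, hadj⟩ := hcase
      refine ⟨E i, E j, (hEsup _).mpr ⟨i, rfl⟩, (hEsup _).mpr ⟨j, rfl⟩,
        fun h => hj2 (hEinj h).symm, hadj, ?_⟩
      intro hmem
      obtain ⟨k, hk⟩ := (hEedg _).mp hmem
      rcases Sym2.eq_iff.mp hk with ⟨h1, h2⟩ | ⟨h1, h2⟩
      · apply hj3
        linear_combination hEinj h2 - hEinj h1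
      · apply hj1
        have hik : i = k + 1 := hEinj h1
        have hjk : j = k := hEinj h2
        rw [hik, hjk]
        ring
    · exfalso
      push_neg at hcase
      have hshare : ∀ i, ∃ z : V, z ∈ (E i : Sym2 V) ∧ z ∈ (E (i + 1) : Sym2 V) := by
        intro i
        obtain ⟨-, z, hz1, hz2⟩ := lineGraph_adj_iff_exists.mp (hEadj i)
        exact ⟨z, hz1, hz2⟩
      choose vf hv1 hv2 using hshare
      have hnc : ∀ i j : ZMod W.length, j ≠ i - 1 → j ≠ i → j ≠ i + 1 →
          ∀ z : V, z ∈ (E i : Sym2 V) → z ∈ (E j : Sym2 V) → False := by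
        intro i j h1 h2 h3 z hzi hzj
        have hne : E i ≠ E j := fun h => h2 (hEinj h).symm
        exact (hcase i j) h1 h2 h3 (lineGraph_adj_iff_exists.mpr ⟨hne, z, hzi, hzj⟩)
      have hstep : ∀ i, vf i ≠ vf (i + 1) := by
        intro i heq
        refine hnc i (i + 2) ?_ ?_ ?_ (vf i) (hv1 i) ?_
        · intro h
          have h' : ((3 : ℕ) : ZMod W.length) = ((0 : ℕ) : ZMod W.length) := by
            push_cast; linear_combination h
          have := hzero 3 (by omega) (by simpa using h')
          omega
        · intro h
          have h' : ((2 : ℕ) : ZMod W.length) = ((0 : ℕ) : ZMod W.length) := by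
            push_cast; linear_combination h
          have := hzero 2 (by omega) (by simpa using h')
          omega
        · intro h
          have h' : ((1 : ℕ) : ZMod W.length) = ((0 : ℕ) : ZMod W.length) := by
            push_cast; linear_combination h
          have := hzero 1 (by omega) (by simpa using h')
          omega
        · rw [heq]
          have h2 := hv2 (i + 1)
          have : i + 1 + 1 = i + 2 := by ring
          rwa [this] at h2
      have hErep : ∀ i, (E (i + 1) : Sym2 V) = s(vf i, vf (i + 1)) :=
        fun i => (Sym2.mem_and_mem_iff (hstep i)).mp ⟨hv2 i, hv1 (i + 1)⟩
      have hvadj : ∀ i, G.Adj (vf i) (vf (i + 1)) := by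
        intro i
        have h2 := (E (i + 1)).2
        rw [hErep i] at h2
        exact (SimpleGraph.mem_edgeSet G).mp h2
      have hvinj : Function.Injective vf := by
        intro i j heq
        by_contra hne
        have hadj' : (G.lineGraph).Adj (E (i + 1)) (E (j + 1)) := by
          refine lineGraph_adj_iff_exists.mpr ⟨?_, vf i, hv2 i, ?_⟩
          · intro h
            exact hne (by linear_combination hEinj h)
          · rw [heq]; exact hv2 j
        have h1 : j + 1 ≠ (i + 1) - 1 := by
          intro hh
          have hij : i = j + 1 := by linear_combination -hh
          have : vf j = vf (j + 1) := by rw [← hij]; exact heq.symm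
          exact hstep j this
        have h2 : j + 1 ≠ i + 1 := by
          intro hh
          exact hne (by linear_combination -hh)
        have h3 : j + 1 ≠ i + 1 + 1 := by
          intro hh
          have hji : j = i + 1 := by linear_combination hh
          exact hstep i (by rw [← hji]; exact heq)
        exact hcase (i + 1) (j + 1) h1 h2 h3 hadj'
      obtain ⟨c, hc, hclen, -, -⟩ :=
        exists_cycle_of_cycFun W.length (by omega) vf hvinj hvadj
      have := hG _ c hc
      omega
  · -- lineGraph chordal → no long cycles in G
    intro hC v w hw
    by_contra hlen
    push_neg at hlen
    obtain ⟨g, hginj, hgadj, hgsup, hgedg⟩ := cycFun_of_cycle hw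
    haveI : NeZero w.length := ⟨by omega⟩
    have hzero : ∀ m : ℕ, m < w.length → ((m : ℕ) : ZMod w.length) = 0 → m = 0 := by
      intro m hm h
      exact cast_eq_zero_aux hm (by simpa using h)
    set E : ZMod w.length → G.edgeSet :=
      fun i => ⟨s(g i, g (i + 1)), (SimpleGraph.mem_edgeSet G).mpr (hgadj i)⟩ with hE
    have hEcoe : ∀ i, (E i : Sym2 V) = s(g i, g (i + 1)) := fun i => rfl
    have hEinj : Function.Injective E := by
      intro i j h
      have h' : s(g i, g (i + 1)) = s(g j, g (j + 1)) := congrArg Subtype.val h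
      rcases Sym2.eq_iff.mp h' with ⟨h1, h2⟩ | ⟨h1, h2⟩
      · exact hginj h1
      · exfalso
        have e1 : i = j + 1 := hginj h1
        have e2 : j = i + 1 := hginj h2.symm
        have h'' : ((2 : ℕ) : ZMod w.length) = ((0 : ℕ) : ZMod w.length) := by
          push_cast
          linear_combination -e1 - e2
        have := hzero 2 (by omega) (by simpa using h'')
        omega
    have hEadj : ∀ i, (G.lineGraph).Adj (E i) (E (i + 1)) := by
      intro i
      refine lineGraph_adj_iff_exists.mpr ⟨?_, g (i + 1), ?_, ?_⟩
      · intro h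
        have he := hEinj h
        have h'' : ((1 : ℕ) : ZMod w.length) = ((0 : ℕ) : ZMod w.length) := by
          push_cast
          linear_combination -he
        have := hzero 1 (by omega) (by simpa using h'')
        omega
      · rw [hEcoe]; exact Sym2.mem_mk_right _ _
      · rw [hEcoe]; exact Sym2.mem_mk_left _ _
    obtain ⟨W, hWc, hWlen, hWsup, hWedg⟩ :=
      exists_cycle_of_cycFun (G := G.lineGraph) w.length (by omega) E hEinj hEadj
    obtain ⟨x, y, hxs, hys, hxy, hadj, hne⟩ := hC _ W hWc (by omega)
    obtain ⟨i, rfl⟩ := (hWsup x).mp hxs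
    obtain ⟨j, rfl⟩ := (hWsup y).mp hys
    obtain ⟨hEne, z, hzi, hzj⟩ := lineGraph_adj_iff_exists.mp hadj
    rw [hEcoe, Sym2.mem_iff] at hzi hzj
    apply hne
    rw [hWedg]
    rcases hzi with rfl | rfl <;> rcases hzj with h | h
    · exact absurd (hginj h) fun hh => hxy (congrArg E hh)
    · have hij : i = j + 1 := hginj h
      exact ⟨j, by rw [hij, Sym2.eq_swap]⟩
    · have hji : j = i + 1 := hginj h.symm
      exact ⟨i, by rw [hji]⟩
    · have h1 : i + 1 = j + 1 := hginj h
      have h2 : i = j := by linear_combination h1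
      exact absurd h2 fun hh => hxy (congrArg E hh)

end Aux

/-- A finite simple graph `G` has no cycles of length four or greater if and only if its line
graph is chordal. -/
theorem no_long_cycles_iff_lineGraph_chordal
    {V : Type*} [Fintype V] [DecidableEq V] (G : SimpleGraph V) :
    (∀ (v : V) (w : G.Walk v v), w.IsCycle → w.length < 4) ↔ IsChordal G.lineGraph := by
  exact main_thm G
end
end
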